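/- arXiv:1410.3486 — 4 statements merged into one kernel-verified Lean document; each statement's English description precedes it below -/
import Mathlib

section
/- Let M be a monoid satisfying the unique product property (a u.p.-monoid) and let R be a central reduced ring, i.e., every nilpotent element of R lies in the center of R. Then R is M-central Armendariz: whenever α, β ∈ R[M] satisfy αβ = 0, the product (α g)·(β h) lies in the center of R for every g in the support of α and every h in the support of β. -/
/-!
The central nilpotent elements form a two-sided ideal `N` with `R ⧸ N` reduced, so it suffices to
show that over a reduced ring `α * β = 0` forces `α g * β h = 0` for all `g, h`. This goes by
induction on the total size of the supports: a uniquely expressible product `g₀ h₀` gives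
`α g₀ * β h₀ = 0`; then `β * single 1 (α g₀)` has smaller support than `β`, and the induction
hypothesis for it yields `α g₀ * β y = 0` for every `y`, so the term of `α` at `g₀` can be erased.
-/

open Finset MonoidAlgebra

namespace IsReduced

variable {R : Type*} [Ring R] [IsReduced R] {a b : R}

theorem mul_eq_zero_symm (h : a * b = 0) : b * a = 0 :=
  IsNilpotent.eq_zero ⟨2, by rw [sq, mul_assoc, ← mul_assoc a, h, zero_mul, mul_zero]⟩

theorem mul_eq_zero_of_mul_mul_eq_zero (h : a * b * a = 0) : a * b = 0 :=
  mul_eq_zero_symm <| IsNilpotent.eq_zero ⟨2, by rw [sq, mul_assoc, ← mul_assoc a, h, mul_zero]⟩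

end IsReduced

namespace TwoSidedIdeal

variable {R : Type*} [Ring R]

theorem ringCon_mk'_eq_zero_iff (I : TwoSidedIdeal R) {a : R} : I.ringCon.mk' a = 0 ↔ a ∈ I := by
  rw [← mem_ker, ker_ringCon_mk']

theorem isReduced_quotient {I : TwoSidedIdeal R} (hI : ∀ (a : R) (n : ℕ), a ^ n ∈ I → a ∈ I) :
    IsReduced I.ringCon.Quotient where
  eq_zero x := by
    obtain ⟨a, rfl⟩ := I.ringCon.mk'_surjective x
    rintro ⟨n, hn⟩
    rw [← map_pow, ringCon_mk'_eq_zero_iff] at hn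
    exact (ringCon_mk'_eq_zero_iff I).2 (hI a n hn)

def nilpotentsOfCentral (hR : ∀ a : R, IsNilpotent a → a ∈ Set.center R) : TwoSidedIdeal R :=
  .mk' {a | IsNilpotent a} .zero
    (fun ha hb => ((hR _ ha).comm _).isNilpotent_add ha hb) IsNilpotent.neg
    (fun hb => ((hR _ hb).comm _).symm.isNilpotent_mul_left hb)
    (fun ha => ((hR _ ha).comm _).isNilpotent_mul_right ha)

theorem mem_nilpotentsOfCentral {hR : ∀ a : R, IsNilpotent a → a ∈ Set.center R} {a : R} :
    a ∈ nilpotentsOfCentral hR ↔ IsNilpotent a :=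
  mem_mk' ..

theorem isReduced_quotient_nilpotentsOfCentral (hR : ∀ a : R, IsNilpotent a → a ∈ Set.center R) :
    IsReduced (nilpotentsOfCentral hR).ringCon.Quotient :=
  isReduced_quotient fun _ _ ha =>
    mem_nilpotentsOfCentral.2 (mem_nilpotentsOfCentral.1 ha).of_pow

end TwoSidedIdeal

namespace MonoidAlgebra

variable {R M : Type*} [Monoid M]

section Semiring

variable [Semiring R]

theorem card_support_mul_single_one_lt {β : R[M]} {a : R} {h₀ : M} (hh₀ : β.coeff h₀ ≠ 0)
    (ha : β.coeff h₀ * a = 0) :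
    #(β * single 1 a).coeff.support < #β.coeff.support := by
  refine card_lt_card ⟨fun y hy => ?_, fun hsub => ?_⟩
  · simp only [Finsupp.mem_support_iff, coeff_mul_single_one] at hy ⊢
    exact left_ne_zero_of_mul hy
  · simpa [coeff_mul_single_one, ha] using hsub (Finsupp.mem_support_iff.2 hh₀)

theorem single_mul_eq_zero {β : R[M]} {a : R} (g : M) (ha : ∀ y, a * β.coeff y = 0) :
    single g a * β = 0 := by
  have h₁ : single 1 a * β = 0 := by ext y; simp [coeff_single_one_mul, ha]
  rw [← one_mul a, ← mul_one g, ← single_mul_single, mul_assoc, h₁, mul_zero]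

end Semiring

theorem coeff_mul_coeff_eq_zero_of_mul_eq_zero [Ring R] [IsReduced R] [UniqueProds M] {α β : R[M]}
    (hαβ : α * β = 0) (g h : M) :
    α.coeff g * β.coeff h = 0 := by
  classical
  induction hn : #α.coeff.support + #β.coeff.support using Nat.strong_induction_on
    generalizing α β g h with
  | _ n ih =>
  subst hn
  obtain hα | hα := α.coeff.support.eq_empty_or_nonempty
  · simp [Finsupp.support_eq_empty.1 hα]
  obtain hβ | hβ := β.coeff.support.eq_empty_or_nonempty
  · simp [Finsupp.support_eq_empty.1 hβ]
  obtain ⟨g₀, hg₀, h₀, hh₀, hu⟩ := UniqueProds.uniqueMul_of_nonempty hα hβ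
  set a := α.coeff g₀
  have ha : a * β.coeff h₀ = 0 := by simpa [hαβ] using (coeff_mul_mul_of_uniqueMul hu).symm
  -- `α * (β * single 1 a) = 0` has fewer terms, and its coefficients give `a * β y * a = 0`
  have haβ (y : M) : a * β.coeff y = 0 := by
    have hlt := card_support_mul_single_one_lt (Finsupp.mem_support_iff.1 hh₀)
      (IsReduced.mul_eq_zero_symm ha)
    have := ih (#α.coeff.support + #(β * single 1 a).coeff.support) (by omega)
      (by rw [← mul_assoc, hαβ, zero_mul]) g₀ y rfl
    exact IsReduced.mul_eq_zero_of_mul_mul_eq_zero (by simpa [coeff_mul_single_one, mul_assoc])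
  have herase : α.erase g₀ * β = 0 := by
    rw [eq_sub_of_add_eq' (single_add_erase g₀ α), sub_mul, hαβ, single_mul_eq_zero g₀ haβ,
      sub_zero]
  by_cases hg : g = g₀
  · exact hg ▸ haβ h
  · have hlt : #(α.erase g₀).coeff.support < #α.coeff.support := by
      rw [coeff_erase, Finsupp.support_erase]
      exact card_erase_lt_of_mem hg₀
    simpa [coeff_erase, Finsupp.erase_ne hg] using
      ih (#(α.erase g₀).coeff.support + #β.coeff.support) (by omega) herase g h rfl

end MonoidAlgebra

/-- If `M` is a u.p.-monoid and `R` is central reduced (every nilpotent element is central),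
then `R` is `M`-central Armendariz. -/
theorem stmt_0 (M R : Type*) [Monoid M] [Ring R] [UniqueProds M]
    (hred : ∀ a : R, IsNilpotent a → a ∈ Set.center R) :
    ∀ α β : MonoidAlgebra R M, α * β = 0 →
      ∀ g ∈ α.coeff.support, ∀ h ∈ β.coeff.support, α.coeff g * β.coeff h ∈ Set.center R := by
  intro α β hαβ g _ h _
  let I := TwoSidedIdeal.nilpotentsOfCentral hred
  have := TwoSidedIdeal.isReduced_quotient_nilpotentsOfCentral hred
  let π := MonoidAlgebra.mapRingHom M I.ringCon.mk'
  have hπ : π α * π β = 0 := by rw [← map_mul, hαβ, map_zero]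
  have hgh := coeff_mul_coeff_eq_zero_of_mul_eq_zero hπ g h
  rw [coeff_mapRingHom, coeff_mapRingHom, ← map_mul, I.ringCon_mk'_eq_zero_iff,
    TwoSidedIdeal.mem_nilpotentsOfCentral] at hgh
  exact hred _ hgh
end

section
/- Let M be a monoid and R a ring. If R is M-central Armendariz, then either R is commutative or M is cancellative (both left and right cancellative). -/
/-!
If `m * g = m * h` with `g ≠ h`, then `single m x * (single g 1 - single h 1) = 0` in `R[M]`
for every `x : R`, so the central Armendariz condition puts `x * 1 = x` in the center;
symmetrically for `g * m = h * m`.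
Hence a failure of cancellation in `M` makes every element of `R` central.
-/

open MonoidAlgebra

def IsCentralArmendariz (R M : Type*) [Ring R] [Monoid M] : Prop :=
  ∀ α β : MonoidAlgebra R M, α * β = 0 →
    ∀ g ∈ α.coeff.support, ∀ h ∈ β.coeff.support, α.coeff g * β.coeff h ∈ Set.center R

namespace IsCentralArmendariz

variable {R M : Type*} [Ring R] [Monoid M]

theorem coeff_mul_coeff_mem_center (hR : IsCentralArmendariz R M) {α β : MonoidAlgebra R M}
    (hαβ : α * β = 0) (g h : M) : α.coeff g * β.coeff h ∈ Set.center R := by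
  by_cases hg : g ∈ α.coeff.support
  · by_cases hh : h ∈ β.coeff.support
    · exact hR α β hαβ g hg h hh
    · rw [Finsupp.notMem_support_iff.mp hh, mul_zero]
      exact Set.zero_mem_center
  · rw [Finsupp.notMem_support_iff.mp hg, zero_mul]
    exact Set.zero_mem_center

theorem coeff_single_sub_single {g h : M} (hgh : g ≠ h) (x : R) :
    (single g x - single h x).coeff g = x := by
  simp [coeff_sub, coeff_single, hgh.symm]

theorem mem_center_of_mul_left_eq (hR : IsCentralArmendariz R M) {m g h : M}
    (hmgh : m * g = m * h) (hgh : g ≠ h) (x : R) : x ∈ Set.center R := by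
  have hzero : single m x * (single g 1 - single h 1) = 0 := by
    rw [mul_sub, single_mul_single, single_mul_single, hmgh, sub_self]
  have hx := hR.coeff_mul_coeff_mem_center hzero m g
  rwa [coeff_single_sub_single hgh, coeff_single, Finsupp.single_eq_same, mul_one] at hx

theorem mem_center_of_mul_right_eq (hR : IsCentralArmendariz R M) {m g h : M}
    (hgmh : g * m = h * m) (hgh : g ≠ h) (x : R) : x ∈ Set.center R := by
  have hzero : (single g x - single h x) * single m 1 = 0 := by
    rw [sub_mul, single_mul_single, single_mul_single, hgmh, sub_self]
  have hx := hR.coeff_mul_coeff_mem_center hzero g m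
  rwa [coeff_single_sub_single hgh, coeff_single, Finsupp.single_eq_same, mul_one] at hx

end IsCentralArmendariz

/-- If `R` is `M`-central Armendariz, then either `R` is commutative or `M` is cancellative. -/
theorem stmt_1 (M R : Type*) [Monoid M] [Ring R]
    (hCA : ∀ α β : MonoidAlgebra R M, α * β = 0 →
      ∀ g ∈ α.coeff.support, ∀ h ∈ β.coeff.support, α.coeff g * β.coeff h ∈ Set.center R) :
    (∀ a b : R, a * b = b * a) ∨
      ((∀ m g h : M, m * g = m * h → g = h) ∧ (∀ m g h : M, g * m = h * m → g = h)) := by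
  have hR : IsCentralArmendariz R M := hCA
  by_cases hM : (∀ m g h : M, m * g = m * h → g = h) ∧ (∀ m g h : M, g * m = h * m → g = h)
  · exact Or.inr hM
  have hcenter : ∀ x : R, x ∈ Set.center R := by
    simp only [not_and_or, not_forall, exists_prop] at hM
    obtain ⟨m, g, h, hmgh, hgh⟩ | ⟨m, g, h, hgmh, hgh⟩ := hM
    · exact hR.mem_center_of_mul_left_eq hmgh hgh
    · exact hR.mem_center_of_mul_right_eq hgmh hgh
  exact Or.inl fun a b => ((Set.mem_center_iff.mp (hcenter b)).comm a).symm
end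

section
/- Let M be a monoid with at least two elements and R a ring. If R is M-Armendariz, then R is Abelian, i.e., every idempotent element of R is central. -/
/-!
If `e` is idempotent and `a` arbitrary, `c = e a (1 - e)` satisfies `e c = c = c (1 - e)` and
`c² = 0`. For `g ≠ 1` in `M` the elements `e - c g` and `(1 - e) + c g` of `R[M]` then multiply
to zero, so the Armendariz condition gives `e c = 0`, i.e. `c = 0`. Symmetrically
`(1 - e) a e = 0`, and the two identities together say `e a = e a e = a e`.
-/

def IsArmendariz (M R : Type*) [Monoid M] [Semiring R] : Prop :=
  ∀ α β : MonoidAlgebra R M, α * β = 0 →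
    ∀ g ∈ α.coeff.support, ∀ h ∈ β.coeff.support, α.coeff g * β.coeff h = 0

theorem commute_of_mul_mul_one_sub_eq_zero {R : Type*} [Ring R] {e a : R}
    (h₁ : e * a * (1 - e) = 0) (h₂ : (1 - e) * a * e = 0) : Commute e a := by
  rw [Commute, SemiconjBy, ← sub_eq_zero,
    show e * a - a * e = e * a * (1 - e) - (1 - e) * a * e by noncomm_ring, h₁, h₂, sub_zero]

namespace IsArmendariz

variable {M R : Type*} [Monoid M] [Nontrivial M] [Ring R]

theorem eq_zero_of_mul_self_eq_zero (hA : IsArmendariz M R) {u v c : R} (huv : u * v = 0)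
    (huc : u * c = c) (hcv : c * v = c) (hc : c * c = 0) : c = 0 := by
  by_contra hc₀
  obtain ⟨g, hg⟩ := exists_ne (1 : M)
  let α : MonoidAlgebra R M := .single 1 u - .single g c
  let β : MonoidAlgebra R M := .single 1 v + .single g c
  have hαβ : α * β = 0 := by
    simp only [α, β, sub_mul, mul_add, MonoidAlgebra.single_mul_single, one_mul, mul_one,
      huv, huc, hcv, hc, MonoidAlgebra.single_zero]
    abel
  have hα : α.coeff 1 = u := by simp [α, MonoidAlgebra.coeff_single, hg]
  have hβ : β.coeff g = c := by simp [β, MonoidAlgebra.coeff_single, hg.symm]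
  have hu : u ≠ 0 := by rintro rfl; exact hc₀ (by rw [← huc, zero_mul])
  have := hA α β hαβ 1 (by simpa [hα]) g (by simpa [hβ])
  rw [hα, hβ, huc] at this
  exact hc₀ this

theorem mul_mul_one_sub_eq_zero (hA : IsArmendariz M R) {e : R} (he : IsIdempotentElem e)
    (a : R) : e * a * (1 - e) = 0 :=
  hA.eq_zero_of_mul_self_eq_zero he.mul_one_sub_self
    (by rw [← mul_assoc, ← mul_assoc, he.eq])
    (by rw [mul_assoc, he.one_sub.eq])
    (by simp only [mul_assoc]; rw [← mul_assoc (1 - e), he.one_sub_mul_self]; simp)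

end IsArmendariz

/-- Every `M`-Armendariz ring with `|M| ≥ 2` is Abelian. -/
theorem stmt_5 (M R : Type*) [Monoid M] [Nontrivial M] [Ring R]
    (hA : ∀ α β : MonoidAlgebra R M, α * β = 0 →
      ∀ g ∈ α.coeff.support, ∀ h ∈ β.coeff.support, α.coeff g * β.coeff h = 0) :
    ∀ f : R, IsIdempotentElem f → f ∈ Set.center R := by
  have hA : IsArmendariz M R := hA
  intro f hf
  rw [Semigroup.mem_center_iff]
  intro a
  have h₂ := hA.mul_mul_one_sub_eq_zero hf.one_sub a
  rw [sub_sub_cancel] at h₂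
  exact (commute_of_mul_mul_one_sub_eq_zero (hA.mul_mul_one_sub_eq_zero hf a) h₂).symm.eq
end

section
/- Let ℤ₂ be the field of integers modulo 2 and let R be the Hamiltonian quaternions over ℤ₂ (Mathlib: Quaternion (ZMod 2)). Then for every monoid M with at least two elements, R is not M-Armendariz: explicitly, for e the identity of M and g ≠ e, the element α = (1+i)·e + (1+j)·g of R[M] satisfies α² = 0, yet (1+i)·(1+j) ≠ 0. -/
/-!
Over `ℤ₂` the quaternions `a = 1 + i` and `b = 1 + j` satisfy `a² = 2i = 0`, `b² = 0` and
`ab + ba = 2(1 + i + j) = 0`, while `ab = 1 + i + j + k ≠ 0`. Hence for `g ≠ 1` the element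
`α = a·1 + b·g` has `α² = a²·1 + (ab + ba)·g + b²·g² = 0`, although the product `ab` of the
coefficients of `α` at `1` and at `g` is nonzero.
-/

namespace MonoidAlgebra

def IsArmendariz (R M : Type*) [Semiring R] [Monoid M] : Prop :=
  ∀ α β : MonoidAlgebra R M, α * β = 0 →
    ∀ g ∈ α.coeff.support, ∀ h ∈ β.coeff.support, α.coeff g * β.coeff h = 0

variable {R M : Type*} [Semiring R] [Monoid M]

theorem single_one_add_single_mul_self_eq_zero {a b : R} (haa : a * a = 0) (hbb : b * b = 0)
    (hab : a * b + b * a = 0) (g : M) :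
    (single 1 a + single g b) * (single 1 a + single g b) = 0 := by
  simp only [mul_add, add_mul, single_mul_single, one_mul, mul_one, haa, hbb, single_zero,
    zero_add, add_zero, ← single_add]
  rw [add_comm, hab, single_zero]

theorem coeff_single_one_add_single_apply_one {g : M} (hg : g ≠ 1) (a b : R) :
    (single 1 a + single g b).coeff 1 = a := by
  simp [coeff_add, coeff_single, hg]

theorem coeff_single_one_add_single_apply_self {g : M} (hg : g ≠ 1) (a b : R) :
    (single 1 a + single g b).coeff g = b := by
  simp [coeff_add, coeff_single, hg.symm]

theorem not_isArmendariz_of_mul_self_eq_zero [Nontrivial M] {a b : R} (haa : a * a = 0)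
    (hbb : b * b = 0) (hab : a * b + b * a = 0) (hab₀ : a * b ≠ 0) : ¬ IsArmendariz R M := by
  intro hR
  obtain ⟨g, hg⟩ := exists_ne (1 : M)
  have hα₁ := coeff_single_one_add_single_apply_one hg a b
  have hαg := coeff_single_one_add_single_apply_self hg a b
  have h := hR _ _ (single_one_add_single_mul_self_eq_zero haa hbb hab g)
    1 (by rw [Finsupp.mem_support_iff, hα₁]; exact left_ne_zero_of_mul hab₀)
    g (by rw [Finsupp.mem_support_iff, hαg]; exact right_ne_zero_of_mul hab₀)
  rw [hα₁, hαg] at h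
  exact hab₀ h

end MonoidAlgebra

namespace Quaternion

theorem zmod_two_one_add_i_mul_self :
    (1 + ⟨0, 1, 0, 0⟩ : ℍ[ZMod 2]) * (1 + ⟨0, 1, 0, 0⟩) = 0 := by
  ext <;> simp <;> decide

theorem zmod_two_one_add_j_mul_self :
    (1 + ⟨0, 0, 1, 0⟩ : ℍ[ZMod 2]) * (1 + ⟨0, 0, 1, 0⟩) = 0 := by
  ext <;> simp <;> decide

theorem zmod_two_one_add_i_anticomm_one_add_j :
    (1 + ⟨0, 1, 0, 0⟩ : ℍ[ZMod 2]) * (1 + ⟨0, 0, 1, 0⟩) +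
      (1 + ⟨0, 0, 1, 0⟩) * (1 + ⟨0, 1, 0, 0⟩) = 0 := by
  ext <;> simp <;> decide

theorem zmod_two_one_add_i_mul_one_add_j_ne_zero :
    (1 + ⟨0, 1, 0, 0⟩ : ℍ[ZMod 2]) * (1 + ⟨0, 0, 1, 0⟩) ≠ 0 := by
  simp [Quaternion.ext_iff]; decide

end Quaternion

/-- The Hamiltonian quaternions over `ℤ₂` are not `M`-Armendariz for any monoid `M` with
at least two elements: explicitly, for `g ≠ e`, `α = (1+i)·e + (1+j)·g` squares to zero
while `(1+i)(1+j) ≠ 0`. -/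
theorem stmt_17 (M : Type*) [Monoid M] [Nontrivial M] :
    (¬ ∀ α β : MonoidAlgebra (Quaternion (ZMod 2)) M, α * β = 0 →
        ∀ g ∈ α.coeff.support, ∀ h ∈ β.coeff.support, α.coeff g * β.coeff h = 0) ∧
      ∀ g : M, g ≠ 1 →
        (MonoidAlgebra.single (1 : M) (1 + (⟨0, 1, 0, 0⟩ : Quaternion (ZMod 2))) +
              MonoidAlgebra.single g (1 + (⟨0, 0, 1, 0⟩ : Quaternion (ZMod 2)))) *
            (MonoidAlgebra.single (1 : M) (1 + (⟨0, 1, 0, 0⟩ : Quaternion (ZMod 2))) +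
              MonoidAlgebra.single g (1 + (⟨0, 0, 1, 0⟩ : Quaternion (ZMod 2)))) = 0 ∧
          (1 + (⟨0, 1, 0, 0⟩ : Quaternion (ZMod 2))) *
            (1 + (⟨0, 0, 1, 0⟩ : Quaternion (ZMod 2))) ≠ 0 :=
  ⟨MonoidAlgebra.not_isArmendariz_of_mul_self_eq_zero Quaternion.zmod_two_one_add_i_mul_self
      Quaternion.zmod_two_one_add_j_mul_self Quaternion.zmod_two_one_add_i_anticomm_one_add_j
      Quaternion.zmod_two_one_add_i_mul_one_add_j_ne_zero,
    fun g _ => ⟨MonoidAlgebra.single_one_add_single_mul_self_eq_zero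
      Quaternion.zmod_two_one_add_i_mul_self Quaternion.zmod_two_one_add_j_mul_self
      Quaternion.zmod_two_one_add_i_anticomm_one_add_j g,
      Quaternion.zmod_two_one_add_i_mul_one_add_j_ne_zero⟩⟩
end
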